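/- Let n ≥ 3 be an integer with τ(n) + σ(n) < 2(n + 1). Then the permutability graph of subgroups Γ(D_n) of the dihedral group D_n is not Hamiltonian. -/

import Mathlib

/-!
Let `n = 2^k m` with `m` odd. Colour a subgroup `H` of `D_n` by the class mod `m` of its
reflections `s r^i` whenever `H` has reflections and all its rotations lie in `⟨r^m⟩`. Two
coloured subgroups that permute have the same colour: `s r^j · s r^i ∈ KH = HK` forces
`2 (i - j) ≡ 0 (mod m)`, and `m` is odd. The `m` groups `⟨s r^c⟩` realise every colour, so a
Hamiltonian cycle must leave each colour class through a distinct uncoloured vertex. But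
`τ(n) + σ(n) < 2(n + 1)` says exactly that there are fewer than `m` uncoloured subgroups:
they are the `τ(n) - 1` nontrivial rotation groups and, for each divisor `d ≠ 1` of `n` with
`m ∤ d`, the `d` subgroups `⟨r^d, s r^i⟩`, while the divisors divisible by `m` sum to
`2n - m`.
-/

open scoped Pointwise

/-- The permutability graph of non-normal subgroups `Γ_N(G)`: vertices are the
non-normal (hence proper) subgroups of `G`, and two distinct vertices are adjacent
iff the corresponding subgroups permute, i.e. `HK = KH` as subsets of `G`. -/
def permGraphN (G : Type*) [Group G] :
    SimpleGraph {H : Subgroup G // ¬ H.Normal} where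
  Adj H K := H ≠ K ∧ (H.1 : Set G) * (K.1 : Set G) = (K.1 : Set G) * (H.1 : Set G)
  symm := ⟨fun _ _ ⟨hne, h⟩ => ⟨hne.symm, h.symm⟩⟩
  loopless := ⟨fun _ ⟨hne, _⟩ => hne rfl⟩

/-- The permutability graph of subgroups `Γ(G)`: vertices are the proper nontrivial
subgroups of `G`, and two distinct vertices are adjacent iff the corresponding
subgroups permute, i.e. `HK = KH` as subsets of `G`. -/
def permGraph (G : Type*) [Group G] :
    SimpleGraph {H : Subgroup G // H ≠ ⊥ ∧ H ≠ ⊤} where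
  Adj H K := H ≠ K ∧ (H.1 : Set G) * (K.1 : Set G) = (K.1 : Set G) * (H.1 : Set G)
  symm := ⟨fun _ _ ⟨hne, h⟩ => ⟨hne.symm, h.symm⟩⟩
  loopless := ⟨fun _ ⟨hne, _⟩ => hne rfl⟩

namespace SimpleGraph

variable {V : Type*} {G : SimpleGraph V}

namespace Walk

lemma IsCycle.snd_injOn_darts {a : V} {p : G.Walk a a} (hp : p.IsCycle) :
    Set.InjOn (·.snd) {d | d ∈ p.darts} := fun _ hd _ hd' h ↦
  List.inj_on_of_nodup_map (map_snd_darts p ▸ hp.support_nodup) hd hd' h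

lemma exists_boundary_dart_of_mem_support [DecidableEq V] {a u w : V} (p : G.Walk a a)
    (hu : u ∈ p.support) (hw : w ∈ p.support) (S : Set V) (huS : u ∈ S) (hwS : w ∉ S) :
    ∃ d ∈ p.darts, d.fst ∈ S ∧ d.snd ∉ S := by
  by_cases haS : a ∈ S
  · obtain ⟨d, hd, hdS⟩ := (p.takeUntil w hw).exists_boundary_dart S haS hwS
    exact ⟨d, p.darts_takeUntil_subset_darts hw hd, hdS⟩
  · obtain ⟨d, hd, hdS⟩ := (p.dropUntil u hu).exists_boundary_dart S huS haS
    exact ⟨d, p.darts_dropUntil_subset_darts hu hd, hdS⟩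

end Walk

theorem not_isHamiltonian_of_partialColoring [Fintype V] [DecidableEq V] {C : Type*} [Finite C]
    (f : V → Option C)
    (hadj : ∀ v w c c', G.Adj v w → f v = some c → f w = some c' → c = c')
    (hsurj : ∀ c, ∃ v, f v = some c) (hC : 1 < Nat.card C)
    (hcard : Nat.card {v // f v = none} < Nat.card C) : ¬ G.IsHamiltonian := by
  intro hG
  choose g hg using hsurj
  have : Nontrivial C := Finite.one_lt_card_iff_nontrivial.mp hC
  obtain ⟨c₀, c₁, hc⟩ := exists_pair_ne C
  have : Nontrivial V := ⟨⟨g c₀, g c₁, fun h ↦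
    hc (Option.some_injective _ (by rw [← hg c₀, ← hg c₁, h]))⟩⟩
  obtain ⟨p, hp⟩ := hG.exists_isHamiltonianCycle (g c₀)
  have hexit : ∀ c, ∃ d ∈ p.darts, f d.fst = some c ∧ f d.snd = none := by
    intro c
    obtain ⟨c', hc'⟩ := exists_ne c
    obtain ⟨d, hd, hfst, hsnd⟩ := p.exists_boundary_dart_of_mem_support (hp.mem_support (g c))
      (hp.mem_support (g c')) {v | f v = some c} (hg c) (by simpa [hg] using hc')
    refine ⟨d, hd, hfst, ?_⟩
    cases hd' : f d.snd with
    | none => rfl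
    | some c'' => exact absurd (hd'.trans (congrArg some (hadj _ _ _ _ d.adj hfst hd').symm)) hsnd
  choose D hD hfst hsnd using hexit
  have hinj : Function.Injective fun c ↦ (⟨(D c).snd, hsnd c⟩ : {v // f v = none}) := by
    intro c c' h
    have := hp.isCycle.snd_injOn_darts (hD c) (hD c') (congrArg Subtype.val h)
    simpa [this, hfst c'] using (hfst c).symm
  exact (Nat.card_le_card_of_injective _ hinj).not_gt hcard

end SimpleGraph

namespace ZMod

variable {n : ℕ}

lemma zmultiples_index_eq [NeZero n] (N : AddSubgroup (ZMod n)) :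
    AddSubgroup.zmultiples (N.index : ZMod n) = N := by
  have hdvd : N.index ∣ n := by simpa using N.index_dvd_card
  refine AddSubgroup.eq_of_le_of_card_ge ?_ ?_
  · rw [AddSubgroup.zmultiples_le]
    simpa using N.nsmul_index_mem 1
  · rw [Nat.card_zmultiples, ZMod.addOrderOf_coe _ (NeZero.ne n), Nat.gcd_eq_right hdvd]
    refine le_of_eq (Nat.eq_div_of_mul_eq_left N.index_ne_zero_of_finite ?_)
    rw [N.card_mul_index, Nat.card_zmod]

lemma castHom_eq_zero_of_dvd_index [NeZero n] {m : ℕ} (hmn : m ∣ n) {N : AddSubgroup (ZMod n)}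
    (hm : m ∣ N.index) {x : ZMod n} (hx : x ∈ N) : castHom hmn (ZMod m) x = 0 := by
  rw [← zmultiples_index_eq N] at hx
  obtain ⟨k, rfl⟩ := AddSubgroup.mem_zmultiples_iff.mp hx
  rw [zsmul_eq_mul, map_mul, map_natCast, (ZMod.natCast_eq_zero_iff _ _).mpr hm, mul_zero]

lemma sub_mem_zmultiples_of_val_mod_eq [NeZero n] {d : ℕ} {i j : ZMod n}
    (h : i.val % d = j.val % d) :
    j - i ∈ AddSubgroup.zmultiples (d : ZMod n) := by
  obtain ⟨t, ht⟩ := (Nat.modEq_iff_dvd.mp h)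
  refine AddSubgroup.mem_zmultiples_iff.mpr ⟨t, ?_⟩
  have := congrArg (Int.cast : ℤ → ZMod n) ht
  rw [Int.cast_sub, Int.cast_natCast, Int.cast_natCast, ZMod.natCast_zmod_val,
    ZMod.natCast_zmod_val, Int.cast_mul, Int.cast_natCast] at this
  rw [zsmul_eq_mul, this, mul_comm]

lemma eq_of_two_mul_eq_two_mul {m : ℕ} (hm : Odd m) {x y : ZMod m} (h : 2 * x = 2 * y) :
    x = y := by
  have h2 : IsUnit ((2 : ℕ) : ZMod m) :=
    (isUnit_iff_coprime 2 m).mpr (Nat.coprime_two_left.mpr hm)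
  exact (by exact_mod_cast h2 : IsUnit (2 : ZMod m)).mul_left_cancel h

end ZMod

namespace DihedralGroup

variable {n : ℕ}

def rotations (H : Subgroup (DihedralGroup n)) : AddSubgroup (ZMod n) where
  carrier := {j | r j ∈ H}
  zero_mem' := by simp
  add_mem' ha hb := by simpa [r_mul_r] using H.mul_mem ha hb
  neg_mem' ha := by simpa [inv_r] using H.inv_mem ha

variable {H K : Subgroup (DihedralGroup n)}

@[simp] lemma mem_rotations {j : ZMod n} : j ∈ rotations H ↔ r j ∈ H := Iff.rfl

lemma sr_mem_iff_sub_mem_rotations {i : ZMod n} (hi : sr i ∈ H) (j : ZMod n) :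
    sr j ∈ H ↔ j - i ∈ rotations H := by
  constructor
  · intro hj
    simpa [sr_mul_sr] using H.mul_mem hi hj
  · intro hj
    simpa [r_mul_sr] using H.mul_mem (H.inv_mem hj) hi

lemma ext_rotations (hrot : rotations H = rotations K) (hsr : ∀ i, sr i ∈ H ↔ sr i ∈ K) :
    H = K := by
  ext g
  cases g with
  | r j => exact SetLike.ext_iff.mp hrot j
  | sr j => exact hsr j

@[simp] lemma rotations_bot : rotations (⊥ : Subgroup (DihedralGroup n)) = ⊥ := by
  ext j
  simp only [mem_rotations, Subgroup.mem_bot, AddSubgroup.mem_bot, one_def, r.injEq]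

lemma eq_bot_of_rotations_eq_bot (hrot : rotations H = ⊥) (hsr : ∀ i, sr i ∉ H) : H = ⊥ :=
  ext_rotations (by rw [hrot, rotations_bot]) fun i ↦
    iff_of_false (hsr i) (by rw [Subgroup.mem_bot, one_def]; exact nofun)

lemma eq_top_of_rotations_eq_top (hrot : rotations H = ⊤) {i : ZMod n} (hi : sr i ∈ H) :
    H = ⊤ := by
  refine (Subgroup.eq_top_iff' H).mpr fun g ↦ ?_
  cases g with
  | r j => exact (mem_rotations (H := H)).mp (hrot ▸ AddSubgroup.mem_top j)
  | sr j => exact (sr_mem_iff_sub_mem_rotations hi j).mpr (hrot ▸ AddSubgroup.mem_top _)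

lemma mem_zpowers_sr [NeZero n] {i : ZMod n} {g : DihedralGroup n} :
    g ∈ Subgroup.zpowers (sr i) ↔ g = 1 ∨ g = sr i := by
  classical
  rw [mem_zpowers_iff_mem_range_orderOf, orderOf_sr]
  simp [Nat.le_one_iff_eq_zero_or_eq_one, or_and_right, exists_or, eq_comm]

lemma zpowers_sr_ne_bot (i : ZMod n) : Subgroup.zpowers (sr i) ≠ ⊥ :=
  Subgroup.zpowers_eq_bot.not.mpr (by rw [one_def]; exact nofun)

lemma zpowers_ne_top (hn : n ≠ 1) (g : DihedralGroup n) : Subgroup.zpowers g ≠ ⊤ :=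
  fun h ↦ not_isCyclic hn (isCyclic_iff_exists_zpowers_eq_top.mpr ⟨g, h⟩)

lemma rotations_zpowers_sr [NeZero n] (i : ZMod n) : rotations (Subgroup.zpowers (sr i)) = ⊥ := by
  ext j
  simp only [mem_rotations, mem_zpowers_sr, AddSubgroup.mem_bot, one_def, r.injEq, reduceCtorEq,
    or_false]

section ReflectionClass

open Classical in
/-- `m ∣ [ZMod n : rotations H]` says that the rotations of `H` lie in `⟨r^m⟩`. -/
noncomputable def reflectionClass (m : ℕ) (hmn : m ∣ n) (H : Subgroup (DihedralGroup n)) :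
    Option (ZMod m) :=
  if h : (∃ i, sr i ∈ H) ∧ m ∣ (rotations H).index then
    some (ZMod.castHom hmn (ZMod m) h.1.choose)
  else none

variable {m : ℕ} {hmn : m ∣ n}

lemma exists_of_reflectionClass_eq_some {c : ZMod m} (h : reflectionClass m hmn H = some c) :
    ∃ i, sr i ∈ H ∧ m ∣ (rotations H).index ∧ ZMod.castHom hmn (ZMod m) i = c := by
  unfold reflectionClass at h
  split_ifs at h with hH
  exact ⟨_, hH.1.choose_spec, hH.2, Option.some_injective _ h⟩

variable [NeZero n]

lemma castHom_eq_of_sr_mem (hm : m ∣ (rotations H).index) {i j : ZMod n} (hi : sr i ∈ H)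
    (hj : sr j ∈ H) : ZMod.castHom hmn (ZMod m) i = ZMod.castHom hmn (ZMod m) j := by
  have := ZMod.castHom_eq_zero_of_dvd_index hmn hm ((sr_mem_iff_sub_mem_rotations hi j).mp hj)
  rw [map_sub, sub_eq_zero] at this
  exact this.symm

lemma reflectionClass_eq_some (hm : m ∣ (rotations H).index) {i : ZMod n} (hi : sr i ∈ H) :
    reflectionClass m hmn H = some (ZMod.castHom hmn (ZMod m) i) := by
  have h : (∃ i, sr i ∈ H) ∧ m ∣ (rotations H).index := ⟨⟨i, hi⟩, hm⟩
  rw [reflectionClass, dif_pos h, castHom_eq_of_sr_mem hm h.1.choose_spec hi]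

lemma not_dvd_index_of_reflectionClass_eq_none (h : reflectionClass m hmn H = none)
    {i : ZMod n} (hi : sr i ∈ H) : ¬ m ∣ (rotations H).index := fun hm ↦ by
  rw [reflectionClass_eq_some hm hi] at h
  exact Option.some_ne_none _ h

lemma reflectionClass_zpowers_sr (i : ZMod n) :
    reflectionClass m hmn (Subgroup.zpowers (sr i)) = some (ZMod.castHom hmn (ZMod m) i) :=
  reflectionClass_eq_some
    (by rwa [rotations_zpowers_sr, AddSubgroup.index_bot, Nat.card_zmod]) (Subgroup.mem_zpowers _)

lemma reflectionClass_eq_of_mul_comm (hodd : Odd m)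
    (hHK : (H : Set (DihedralGroup n)) * K = K * H) {c c' : ZMod m}
    (hH : reflectionClass m hmn H = some c) (hK : reflectionClass m hmn K = some c') : c = c' := by
  obtain ⟨i, hi, hHm, rfl⟩ := exists_of_reflectionClass_eq_some hH
  obtain ⟨j, hj, hKm, rfl⟩ := exists_of_reflectionClass_eq_some hK
  set φ := ZMod.castHom hmn (ZMod m)
  have hji : sr j * sr i ∈ (H : Set (DihedralGroup n)) * K := hHK ▸ Set.mul_mem_mul hj hi
  obtain ⟨g, hg, g', hg', hprod⟩ := Set.mem_mul.mp hji
  rw [sr_mul_sr] at hprod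
  cases g with
  | r a =>
    cases g' with
    | r b =>
      rw [r_mul_r, r.injEq] at hprod
      have := congrArg φ hprod
      rw [map_add, map_sub, ZMod.castHom_eq_zero_of_dvd_index hmn hHm hg,
        ZMod.castHom_eq_zero_of_dvd_index hmn hKm hg', zero_add] at this
      exact sub_eq_zero.mp this.symm
    | sr b => simp [r_mul_sr] at hprod
  | sr a =>
    cases g' with
    | r b => simp [sr_mul_r] at hprod
    | sr b =>
      rw [sr_mul_sr, r.injEq] at hprod
      have := congrArg φ hprod
      rw [map_sub, map_sub, castHom_eq_of_sr_mem hHm hg hi, castHom_eq_of_sr_mem hKm hg' hj] at this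
      exact ZMod.eq_of_two_mul_eq_two_mul hodd (by linear_combination -this)

end ReflectionClass

section Encoding

open Classical in
/-- A subgroup is determined by the index `d` of its rotations and, if it has reflections, by
the residue mod `d` of any one of them. -/
noncomputable def encode (H : Subgroup (DihedralGroup n)) : ℕ ⊕ (Σ _ : ℕ, ℕ) :=
  if h : ∃ i, sr i ∈ H then .inr ⟨(rotations H).index, h.choose.val % (rotations H).index⟩
  else .inl (rotations H).index

variable [NeZero n]

lemma rotations_eq_of_index_eq (h : (rotations H).index = (rotations K).index) :
    rotations H = rotations K := by
  rw [← ZMod.zmultiples_index_eq (rotations H), h, ZMod.zmultiples_index_eq]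

lemma encode_injective : Function.Injective (encode (n := n)) := by
  intro H K hHK
  unfold encode at hHK
  by_cases hH : ∃ i, sr i ∈ H <;> by_cases hK : ∃ i, sr i ∈ K <;>
    simp only [hH, hK, dite_true, dite_false, reduceCtorEq, Sum.inl.injEq, Sum.inr.injEq,
      Sigma.mk.injEq, heq_iff_eq] at hHK
  · obtain ⟨hidx, hmod⟩ := hHK
    have hrot := rotations_eq_of_index_eq hidx
    rw [← hidx] at hmod
    have hdiff : hK.choose - hH.choose ∈ rotations H := by
      rw [← ZMod.zmultiples_index_eq (rotations H)]
      exact ZMod.sub_mem_zmultiples_of_val_mod_eq hmod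
    refine ext_rotations hrot fun j ↦ ?_
    rw [sr_mem_iff_sub_mem_rotations hH.choose_spec, sr_mem_iff_sub_mem_rotations hK.choose_spec,
      ← hrot, ← sub_add_sub_cancel j hK.choose hH.choose,
      (rotations H).add_mem_cancel_right hdiff]
  · push Not at hH hK
    exact ext_rotations (rotations_eq_of_index_eq hHK) fun i ↦ iff_of_false (hH i) (hK i)

lemma encode_mem {m : ℕ} {hmn : m ∣ n} (hbot : H ≠ ⊥) (htop : H ≠ ⊤)
    (h : reflectionClass m hmn H = none) :
    encode H ∈ (n.divisors.erase n).disjSum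
      (((n.divisors.filter (¬ m ∣ ·)).erase 1).sigma Finset.range) := by
  have hdiv : (rotations H).index ∈ n.divisors :=
    Nat.mem_divisors.mpr ⟨by simpa using (rotations H).index_dvd_card, NeZero.ne n⟩
  unfold encode
  split_ifs with hH
  · simp only [Finset.inr_mem_disjSum, Finset.mem_sigma, Finset.mem_erase, Finset.mem_filter,
      Finset.mem_range]
    have hi := hH.choose_spec
    refine ⟨⟨fun h1 ↦ htop ?_, hdiv, not_dvd_index_of_reflectionClass_eq_none h hi⟩,
      Nat.mod_lt _ (Nat.pos_of_ne_zero (rotations H).index_ne_zero_of_finite)⟩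
    exact eq_top_of_rotations_eq_top (AddSubgroup.index_eq_one.mp h1) hi
  · push Not at hH
    refine Finset.inl_mem_disjSum.mpr (Finset.mem_erase.mpr ⟨fun hn ↦ hbot ?_, hdiv⟩)
    refine eq_bot_of_rotations_eq_bot (AddSubgroup.card_eq_one.mp ?_) hH
    have := (rotations H).card_mul_index
    rw [hn, Nat.card_zmod] at this
    exact (Nat.mul_eq_right (NeZero.ne n)).mp this

theorem card_reflectionClass_eq_none_le {m : ℕ} (hmn : m ∣ n) :
    Nat.card {H : {H : Subgroup (DihedralGroup n) // H ≠ ⊥ ∧ H ≠ ⊤} //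
      reflectionClass m hmn H.1 = none} ≤
    (n.divisors.erase n).card + ∑ d ∈ (n.divisors.filter (¬ m ∣ ·)).erase 1, d := by
  calc _ ≤ Nat.card ((n.divisors.erase n).disjSum
          (((n.divisors.filter (¬ m ∣ ·)).erase 1).sigma Finset.range)) :=
        Nat.card_le_card_of_injective (fun H ↦ ⟨encode H.1.1, encode_mem H.1.2.1 H.1.2.2 H.2⟩)
          fun H K h ↦ Subtype.ext (Subtype.ext (encode_injective (congrArg Subtype.val h)))
    _ = _ := by
      rw [Nat.card_eq_fintype_card, Fintype.card_coe, Finset.card_disjSum, Finset.card_sigma]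
      simp

end Encoding

end DihedralGroup

namespace Nat

lemma sum_divisors_filter_dvd {n m : ℕ} (hn : n ≠ 0) (hmn : m ∣ n) :
    ∑ d ∈ n.divisors with m ∣ d, d = m * ∑ d ∈ (n / m).divisors, d := by
  obtain ⟨k, rfl⟩ := hmn
  have hm : m ≠ 0 := left_ne_zero_of_mul hn
  have hfilter : {d ∈ (m * k).divisors | m ∣ d} =
      k.divisors.map ⟨(m * ·), mul_right_injective₀ hm⟩ := by
    ext d
    simp only [Finset.mem_filter, mem_divisors, Finset.mem_map, Function.Embedding.coeFn_mk]
    constructor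
    · rintro ⟨⟨hd, -⟩, a, rfl⟩
      exact ⟨a, ⟨(Nat.mul_dvd_mul_iff_left (pos_of_ne_zero hm)).mp hd,
        right_ne_zero_of_mul hn⟩, rfl⟩
    · rintro ⟨a, ⟨ha, -⟩, rfl⟩
      exact ⟨⟨Nat.mul_dvd_mul_left m ha, hn⟩, dvd_mul_right m a⟩
  rw [hfilter, Finset.sum_map, Nat.mul_div_cancel_left k (pos_of_ne_zero hm), Finset.mul_sum]
  rfl

lemma sum_divisors_two_pow_add_one (k : ℕ) : ∑ d ∈ (2 ^ k).divisors, d + 1 = 2 ^ (k + 1) := by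
  rw [Nat.sum_divisors_prime_pow Nat.prime_two, Nat.geomSum_eq le_rfl]
  have := Nat.one_le_two_pow (n := k + 1)
  omega

lemma card_add_sum_divisors_two_pow {k : ℕ} (hk : 2 ≤ k) :
    2 * (2 ^ k + 1) ≤ (2 ^ k).divisors.card + ∑ d ∈ (2 ^ k).divisors, d := by
  have hτ : (2 ^ k).divisors.card = k + 1 := by
    rw [Nat.divisors_prime_pow Nat.prime_two, Finset.card_map, Finset.card_range]
  have hσ := sum_divisors_two_pow_add_one k
  rw [pow_succ] at hσ
  omega

lemma card_erase_add_sum_lt_of_odd {k m : ℕ} (hm : Odd m) (hm1 : m ≠ 1)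
    (h : (2 ^ k * m).divisors.card + ∑ d ∈ (2 ^ k * m).divisors, d < 2 * (2 ^ k * m + 1)) :
    ((2 ^ k * m).divisors.erase (2 ^ k * m)).card +
      ∑ d ∈ ((2 ^ k * m).divisors.filter (¬ m ∣ ·)).erase 1, d < m := by
  set N := 2 ^ k * m
  have hN : N ≠ 0 := mul_ne_zero (by positivity) hm.pos.ne'
  have hdvd : ∑ d ∈ N.divisors with m ∣ d, d + m = 2 * N := by
    rw [sum_divisors_filter_dvd hN (dvd_mul_left m _), Nat.mul_div_cancel _ hm.pos,
      ← Nat.mul_add_one, sum_divisors_two_pow_add_one, pow_succ]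
    ring
  have hndvd := Finset.add_sum_erase (N.divisors.filter (¬ m ∣ ·)) id
    (Finset.mem_filter.mpr ⟨one_mem_divisors.mpr hN, fun h1 ↦ hm1 (Nat.dvd_one.mp h1)⟩)
  have hsplit := Finset.sum_filter_add_sum_filter_not N.divisors (m ∣ ·) id
  have hcard := Finset.card_erase_of_mem (mem_divisors_self N hN)
  have hpos := Finset.card_pos.mpr ⟨N, mem_divisors_self N hN⟩
  simp only [id] at hndvd hsplit
  omega

end Nat

/-- if `n ≥ 3` and `τ(n) + σ(n) < 2(n+1)`, then `Γ(D_n)` is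
not Hamiltonian. -/
theorem stmt_16 (n : ℕ) (hn : 3 ≤ n)
    (h : n.divisors.card + ∑ d ∈ n.divisors, d < 2 * (n + 1)) :
    haveI : NeZero n := ⟨by omega⟩
    haveI : DecidableEq {H : Subgroup (DihedralGroup n) // H ≠ ⊥ ∧ H ≠ ⊤} :=
      Classical.decEq _
    haveI : Fintype {H : Subgroup (DihedralGroup n) // H ≠ ⊥ ∧ H ≠ ⊤} :=
      Fintype.ofFinite _
    ¬ (permGraph (DihedralGroup n)).IsHamiltonian := by
  obtain ⟨k, m, hm, rfl⟩ := Nat.exists_eq_two_pow_mul_odd (n := n) (by omega)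
  have hm1 : m ≠ 1 := by
    rintro rfl
    have hk : 2 ≤ k := by
      by_contra hk
      interval_cases k <;> simp at hn
    have := Nat.card_add_sum_divisors_two_pow hk
    simp only [mul_one] at h
    omega
  have hm2 : 1 < m := by have := hm.pos; omega
  have : NeZero m := ⟨hm.pos.ne'⟩
  have hmn : m ∣ 2 ^ k * m := dvd_mul_left m _
  let : DecidableEq {H : Subgroup (DihedralGroup (2 ^ k * m)) // H ≠ ⊥ ∧ H ≠ ⊤} :=
    Classical.decEq _
  let : Fintype {H : Subgroup (DihedralGroup (2 ^ k * m)) // H ≠ ⊥ ∧ H ≠ ⊤} :=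
    Fintype.ofFinite _
  refine SimpleGraph.not_isHamiltonian_of_partialColoring
    (fun H ↦ DihedralGroup.reflectionClass m hmn H.1)
    (fun H K c c' hHK ↦ DihedralGroup.reflectionClass_eq_of_mul_comm hm hHK.2)
    (fun c ↦ ⟨⟨_, DihedralGroup.zpowers_sr_ne_bot (c.val : ZMod _),
      DihedralGroup.zpowers_ne_top (by omega) _⟩, ?_⟩) (by rwa [Nat.card_zmod]) ?_
  · rw [DihedralGroup.reflectionClass_zpowers_sr, map_natCast, ZMod.natCast_zmod_val]
  · calc _ ≤ _ := DihedralGroup.card_reflectionClass_eq_none_le hmn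
      _ < m := Nat.card_erase_add_sum_lt_of_odd hm hm1 h
      _ = _ := (Nat.card_zmod m).symm
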